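/- arXiv:2505.15688 — 4 statements merged into one kernel-verified Lean document; each statement's English description precedes it below -/
import Mathlib

section
/- Let c ∈ (0, 1/2), n ∈ ℕ, and let 𝒞 be a collection of subsets of [n] = {1,...,n}. Suppose that for every U ⊆ [n] there exists V ∈ 𝒞 with |U △ V| ≤ c·n (symmetric difference). Then n ≤ log₂|𝒞| / (1 − h₂(c)), where h₂(t) = t·log₂(1/t) + (1−t)·log₂(1/(1−t)) is the binary entropy function. -/
/-!
Sphere-covering bound. The `2 ^ n` subsets of `[n]` are covered by `|𝒞|` Hamming balls of radius
`c n`, each of which has the size of the ball around `∅`, i.e. of `{W | |W| ≤ c n}`. Weighting each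
`W` by `c ^ |W| (1 - c) ^ (n - |W|)`, these weights sum to `1`, and since `c ≤ 1 - c` every `W` in
the ball weighs at least `c ^ (c n) (1 - c) ^ ((1 - c) n) = 2 ^ (-h₂(c) n)`. Hence
`2 ^ n ≤ |𝒞| 2 ^ (h₂(c) n)`, and taking `log₂` gives the claim because `h₂(c) < 1` for `c ≠ 1/2`.
-/

/-- Binary entropy function. -/
noncomputable def binEnt (t : ℝ) : ℝ :=
  t * Real.logb 2 (1 / t) + (1 - t) * Real.logb 2 (1 / (1 - t))

open Finset Real
open scoped symmDiff

lemma binEnt_eq_binEntropy_div_log_two (t : ℝ) : binEnt t = binEntropy t / log 2 := by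
  rw [binEnt, binEntropy, logb, logb, one_div, one_div]
  ring

lemma binEnt_lt_one {c : ℝ} (hc : c ≠ 1 / 2) : binEnt c < 1 := by
  rw [binEnt_eq_binEntropy_div_log_two, div_lt_one (log_pos one_lt_two)]
  exact binEntropy_lt_log_two.2 (by rwa [← one_div])

lemma two_rpow_neg_binEnt_mul {c : ℝ} (hc0 : 0 < c) (hc1 : c < 1) (m : ℝ) :
    (2 : ℝ) ^ (-(binEnt c * m)) = c ^ (c * m) * (1 - c) ^ (m - c * m) := by
  have hexp : -(binEnt c * m) = logb 2 c * (c * m) + logb 2 (1 - c) * (m - c * m) := by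
    rw [binEnt, one_div, one_div, logb_inv, logb_inv]
    ring
  rw [hexp, rpow_add two_pos, rpow_mul zero_le_two, rpow_mul zero_le_two, rpow_logb two_pos
    (by norm_num) hc0, rpow_logb two_pos (by norm_num) (sub_pos.2 hc1)]

lemma antitone_rpow_mul_one_sub_rpow {c : ℝ} (hc0 : 0 < c) (hc : c ≤ 1 / 2) (m : ℝ) :
    Antitone fun a : ℝ => c ^ a * (1 - c) ^ (m - a) := by
  intro a b hab
  have h1c : 0 < 1 - c := by linarith
  have hle : c ^ (b - a) ≤ (1 - c) ^ (b - a) :=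
    rpow_le_rpow hc0.le (by linarith) (sub_nonneg.2 hab)
  calc c ^ b * (1 - c) ^ (m - b) = c ^ a * c ^ (b - a) * (1 - c) ^ (m - b) := by
        rw [← rpow_add hc0, add_sub_cancel]
    _ ≤ c ^ a * (1 - c) ^ (b - a) * (1 - c) ^ (m - b) := by gcongr
    _ = c ^ a * (1 - c) ^ (m - a) := by
        rw [mul_assoc, ← rpow_add h1c, sub_add_sub_cancel']

lemma card_filter_card_le_le_two_rpow_binEnt {α : Type*} [Fintype α] {c : ℝ} (hc0 : 0 < c)
    (hc : c ≤ 1 / 2) :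
    (#{W : Finset α | (#W : ℝ) ≤ c * Fintype.card α} : ℝ) ≤
      2 ^ (binEnt c * Fintype.card α) := by
  set n := Fintype.card α
  have hweight : ∀ W : Finset α, (#W : ℝ) ≤ c * n →
      (2 : ℝ) ^ (-(binEnt c * n)) ≤ c ^ #W * (1 - c) ^ (n - #W) := by
    intro W hW
    rw [two_rpow_neg_binEnt_mul hc0 (by linarith)]
    calc c ^ (c * n) * (1 - c) ^ ((n : ℝ) - c * n)
        ≤ c ^ (#W : ℝ) * (1 - c) ^ ((n : ℝ) - #W) :=
          antitone_rpow_mul_one_sub_rpow hc0 hc n hW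
      _ = c ^ #W * (1 - c) ^ (n - #W) := by
          rw [← Nat.cast_sub (card_le_univ W), rpow_natCast, rpow_natCast]
  have hsum : (#{W : Finset α | (#W : ℝ) ≤ c * n} : ℝ) * 2 ^ (-(binEnt c * n)) ≤ 1 :=
    calc (#{W : Finset α | (#W : ℝ) ≤ c * n} : ℝ) * 2 ^ (-(binEnt c * n))
        = ∑ _W ∈ {W : Finset α | (#W : ℝ) ≤ c * n}, (2 : ℝ) ^ (-(binEnt c * n)) := by
          rw [sum_const, nsmul_eq_mul]
      _ ≤ ∑ W ∈ {W : Finset α | (#W : ℝ) ≤ c * n}, c ^ #W * (1 - c) ^ (n - #W) :=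
          sum_le_sum fun W hW => hweight W (mem_filter.1 hW).2
      _ ≤ ∑ W : Finset α, c ^ #W * (1 - c) ^ (n - #W) :=
          sum_le_sum_of_subset_of_nonneg (subset_univ _) fun W _ _ => by
            have : 0 ≤ 1 - c := by linarith
            positivity
      _ = 1 := by rw [Fintype.sum_pow_mul_eq_add_pow, add_sub_cancel, one_pow]
  rwa [rpow_neg zero_le_two, ← div_eq_mul_inv, div_le_one (by positivity)] at hsum

lemma card_filter_symmDiff {α : Type*} [Fintype α] [DecidableEq α] (V : Finset α) (p : ℕ → Prop)
    [DecidablePred p] : #{U : Finset α | p #(U ∆ V)} = #{W : Finset α | p #W} :=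
  card_nbij' (· ∆ V) (· ∆ V) (by simp [Set.MapsTo]) (by simp [Set.MapsTo])
    (fun U _ => symmDiff_symmDiff_cancel_right V U) (fun W _ => symmDiff_symmDiff_cancel_right V W)

lemma two_pow_card_le_card_mul_card_filter {α : Type*} [Fintype α] [DecidableEq α]
    (𝒞 : Finset (Finset α)) (p : ℕ → Prop) [DecidablePred p]
    (hcov : ∀ U : Finset α, ∃ V ∈ 𝒞, p #(U ∆ V)) :
    2 ^ Fintype.card α ≤ #𝒞 * #{W : Finset α | p #W} :=
  calc 2 ^ Fintype.card α = #(univ : Finset (Finset α)) := by simp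
    _ ≤ #(𝒞.biUnion fun V => {U : Finset α | p #(U ∆ V)}) := card_le_card fun U _ => by
        obtain ⟨V, hV, hUV⟩ := hcov U
        exact mem_biUnion.2 ⟨V, hV, by simpa using hUV⟩
    _ ≤ ∑ V ∈ 𝒞, #{U : Finset α | p #(U ∆ V)} := card_biUnion_le
    _ = #𝒞 * #{W : Finset α | p #W} := by simp [card_filter_symmDiff]

theorem stmt0 (c : ℝ) (hc0 : 0 < c) (hc : c < 1 / 2) (n : ℕ)
    (𝒞 : Finset (Finset (Fin n)))
    (hcov : ∀ U : Finset (Fin n), ∃ V ∈ 𝒞, ((symmDiff U V).card : ℝ) ≤ c * n) :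
    (n : ℝ) ≤ Real.logb 2 𝒞.card / (1 - binEnt c) := by
  have hcover := two_pow_card_le_card_mul_card_filter 𝒞 (fun k => (k : ℝ) ≤ c * n) hcov
  have hball := card_filter_card_le_le_two_rpow_binEnt (α := Fin n) hc0 hc.le
  rw [Fintype.card_fin] at hcover hball
  have hentropy : (2 : ℝ) ^ (n : ℝ) ≤ #𝒞 * 2 ^ (binEnt c * n) := calc
    (2 : ℝ) ^ (n : ℝ) ≤ #𝒞 * #{W : Finset (Fin n) | (#W : ℝ) ≤ c * n} := by
      rw [rpow_natCast]; exact_mod_cast hcover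
    _ ≤ #𝒞 * 2 ^ (binEnt c * n) := by gcongr
  obtain ⟨V, hV, -⟩ := hcov ∅
  have h𝒞 : (0 : ℝ) < #𝒞 := by exact_mod_cast card_pos.2 ⟨V, hV⟩
  have hlog : (n : ℝ) - binEnt c * n ≤ logb 2 #𝒞 := by
    rw [le_logb_iff_rpow_le one_lt_two h𝒞, rpow_sub two_pos, div_le_iff₀ (by positivity)]
    exact hentropy
  rw [le_div_iff₀ (sub_pos.2 (binEnt_lt_one hc.ne))]
  linarith
end

section
/- Let X be a measurable space, Y a finite set, ℓ : X × Y × Y → ℝ≥0 a bounded and separated loss function (s(ℓ) > 0, ℓ(x,y,y)=0, ‖ℓ‖_∞ < ∞), μ a probability measure on X, and F, F', H : X → Y measurable. Then L_{μ,F,ℓ}(F') ≤ (‖ℓ‖_∞ / s(ℓ)) · (L_{μ,F,ℓ}(H) + L_{μ,F',ℓ}(H)), where L_{μ,G,ℓ}(K) = E_{x∼μ}[ℓ(x, K(x), G(x))]. -/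
open MeasureTheory

theorem stmt4 {X Y : Type*} [MeasurableSpace X] [Fintype Y]
    [MeasurableSpace Y] [MeasurableSingletonClass Y]
    (μ : Measure X) [IsProbabilityMeasure μ]
    (ℓ : X → Y → Y → ℝ) (hnn : ∀ x y y', 0 ≤ ℓ x y y')
    (s C : ℝ) (hs : 0 < s) (hsep : ∀ x y y', y ≠ y' → s ≤ ℓ x y y')
    (hrefl : ∀ x y, ℓ x y y = 0) (hbd : ∀ x y y', ℓ x y y' ≤ C)
    (F F' H : X → Y) (hF : Measurable F) (hF' : Measurable F') (hH : Measurable H)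
    (hint : ∀ G K : X → Y, Measurable G → Measurable K →
      Integrable (fun x => ℓ x (K x) (G x)) μ) :
    ∫ x, ℓ x (F' x) (F x) ∂μ ≤
      (C / s) * ((∫ x, ℓ x (H x) (F x) ∂μ) + ∫ x, ℓ x (H x) (F' x) ∂μ) := by
  have hX : Nonempty X := by
    by_contra h
    rw [not_nonempty_iff] at h
    have : μ Set.univ = 0 := by simp [Set.univ_eq_empty_iff.2 h]
    simp [measure_univ] at this
  obtain ⟨x0⟩ := hX
  have hY : Nonempty Y := ⟨F x0⟩
  have hC : 0 ≤ C := le_trans (hnn x0 (F x0) (F x0)) (hbd x0 (F x0) (F x0))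
  have hCs : 0 ≤ C / s := div_nonneg hC hs.le
  have key : ∀ x, ℓ x (F' x) (F x) ≤
      (C / s) * (ℓ x (H x) (F x) + ℓ x (H x) (F' x)) := by
    intro x
    by_cases h : F' x = F x
    · rw [h, hrefl]
      exact mul_nonneg hCs (add_nonneg (hnn _ _ _) (hnn _ _ _))
    · have hsum : s ≤ ℓ x (H x) (F x) + ℓ x (H x) (F' x) := by
        by_cases h1 : H x = F x
        · have : H x ≠ F' x := by rw [h1]; exact fun hh => h hh.symm
          calc s ≤ ℓ x (H x) (F' x) := hsep x _ _ this
            _ ≤ _ := le_add_of_nonneg_left (hnn _ _ _)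
        · calc s ≤ ℓ x (H x) (F x) := hsep x _ _ h1
            _ ≤ _ := le_add_of_nonneg_right (hnn _ _ _)
      calc ℓ x (F' x) (F x) ≤ C := hbd _ _ _
        _ = (C / s) * s := by field_simp
        _ ≤ (C / s) * (ℓ x (H x) (F x) + ℓ x (H x) (F' x)) :=
          mul_le_mul_of_nonneg_left hsum hCs
  have h1 := hint F H hF hH
  have h2 := hint F' H hF' hH
  calc ∫ x, ℓ x (F' x) (F x) ∂μ
      ≤ ∫ x, (C / s) * (ℓ x (H x) (F x) + ℓ x (H x) (F' x)) ∂μ :=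
        integral_mono (hint F F' hF hF') (((h1.add h2).const_mul _)) key
    _ = (C / s) * ((∫ x, ℓ x (H x) (F x) ∂μ) + ∫ x, ℓ x (H x) (F' x) ∂μ) := by
        rw [integral_const_mul, integral_add h1 h2]
end

section
/- Let Ω be a measurable space, Y a finite set, ℋ a nonempty family of measurable functions Ω^k → Y, ℓ a metric k-ary loss, μ a probability measure on Ω, and 𝒜 a learning algorithm such that for every F ∈ ℋ, with probability at least 1 − δ over x ∼ μ^{m̃}, the algorithm's output on the sample labeled by F has total loss at most ε/2 from F. Suppose F₁,...,F_{m+1} ∈ ℋ are pairwise at total-loss distance > ε. For x ∈ Ω^{m̃}, let Y(x) be the set of label patterns realizable by ℋ on x and let G(x) be the number of indices i ∈ [m+1] such that every y ∈ Y(x) gives 𝒜(x,y) at total-loss distance > ε/2 from F_i. Then G(x) ≥ m + 1 − |Y(x)| for every x, and ∫ G dμ^{m̃} ≤ (m+1)δ; consequently m + 1 − γ ≤ (m+1)δ where γ = sup_x |Y(x)|, i.e., m ≤ γ/(1−δ) − 1. -/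
/-!
Since the F i are ε-separated, each hypothesis 𝒜 x y lies within ε/2 of at most one F i, so at
most |Y(x)| indices are not counted by G(x). On the other hand, index i is counted only on an event
where 𝒜 fails for the target F i, which has probability at most δ; summing over i bounds ∫ G.
Comparing the two bounds gives (m + 1)(1 - δ) ≤ γ.
-/

open MeasureTheory Finset
open scoped Classical

section Separated

variable {H ι P : Type*} [Fintype ι] {L : H → H → ℝ}

theorem card_filter_le_half_le_one_of_separated (hsym : ∀ a b, L a b = L b a)
    (htri : ∀ a b c, L a c ≤ L a b + L b c) {ε : ℝ} {F : ι → H}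
    (hsep : ∀ i j, i ≠ j → ε < L (F i) (F j)) (h : H) :
    #{i | L h (F i) ≤ ε / 2} ≤ 1 := by
  refine card_le_one.mpr fun i hi j hj => ?_
  simp only [mem_filter, mem_univ, true_and] at hi hj
  by_contra hij
  have := htri (F i) h (F j)
  rw [hsym (F i) h] at this
  linarith [hsep i j hij]

theorem card_le_card_filter_forall_lt_add_card (hsym : ∀ a b, L a b = L b a)
    (htri : ∀ a b c, L a c ≤ L a b + L b c) {ε : ℝ} {F : ι → H}
    (hsep : ∀ i j, i ≠ j → ε < L (F i) (F j)) (A : P → H) (Y : Finset P)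
    [DecidablePred fun i => ∀ y ∈ Y, ε / 2 < L (A y) (F i)] :
    Fintype.card ι ≤ #{i | ∀ y ∈ Y, ε / 2 < L (A y) (F i)} + #Y := by
  have hclose : #{i | ¬ ∀ y ∈ Y, ε / 2 < L (A y) (F i)} ≤ #Y :=
    calc #{i | ¬ ∀ y ∈ Y, ε / 2 < L (A y) (F i)}
        ≤ #(Y.biUnion fun y => {i | L (A y) (F i) ≤ ε / 2}) := by
          refine card_le_card fun i hi => ?_
          simpa using hi
      _ ≤ ∑ y ∈ Y, #{i | L (A y) (F i) ≤ ε / 2} := card_biUnion_le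
      _ ≤ ∑ _y ∈ Y, 1 :=
          sum_le_sum fun y _ => card_filter_le_half_le_one_of_separated hsym htri hsep (A y)
      _ = #Y := by simp
  have := card_filter_add_card_filter_not (s := univ)
    (fun i => ∀ y ∈ Y, ε / 2 < L (A y) (F i))
  rw [card_univ] at this
  omega

end Separated

section Measure

theorem card_filter_mem_eq_sum_indicator {X ι : Type*} [Fintype ι] (p : ι → X → Prop)
    [∀ i x, Decidable (p i x)] (x : X) :
    (#{i | p i x} : ℝ) = ∑ i, {x | p i x}.indicator 1 x := by
  rw [Finset.card_filter]
  push_cast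
  simp only [Set.indicator_apply, Set.mem_ofPred_eq, Pi.one_apply]

variable {X ι : Type*} [MeasurableSpace X] {ν : Measure X}

theorem measureReal_le_of_ofReal_one_sub_le [IsProbabilityMeasure ν] {A B : Set X} {δ : ℝ}
    (hB : MeasurableSet B) (hAB : A ⊆ Bᶜ) (hA : ENNReal.ofReal (1 - δ) ≤ ν A) :
    ν.real B ≤ δ := by
  have hA' : 1 - δ ≤ ν.real A := (ENNReal.ofReal_le_iff_le_toReal (measure_ne_top ν A)).mp hA
  have := measureReal_mono (μ := ν) hAB
  rw [probReal_compl_eq_one_sub hB] at this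
  linarith

variable [Fintype ι] [IsFiniteMeasure ν] {p : ι → X → Prop} [∀ i x, Decidable (p i x)]

theorem integrable_card_filter (hp : ∀ i, MeasurableSet {x | p i x}) :
    Integrable (fun x => (#{i | p i x} : ℝ)) ν := by
  simp_rw [card_filter_mem_eq_sum_indicator]
  exact integrable_finsetSum _ fun i _ => (integrable_const 1).indicator (hp i)

theorem integral_card_filter (hp : ∀ i, MeasurableSet {x | p i x}) :
    ∫ x, (#{i | p i x} : ℝ) ∂ν = ∑ i, ν.real {x | p i x} := by
  simp_rw [card_filter_mem_eq_sum_indicator]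
  rw [integral_finsetSum _ fun i _ => (integrable_const 1).indicator (hp i)]
  exact sum_congr rfl fun i _ => integral_indicator_one (hp i)

end Measure

theorem stmt13_general {Ω H P : Type*} [MeasurableSpace Ω] [Fintype P]
    (μ : Measure Ω) [IsProbabilityMeasure μ] (mt : ℕ)
    (L : H → H → ℝ) (hsym : ∀ a b, L a b = L b a)
    (htri : ∀ a b c, L a c ≤ L a b + L b c)
    (Y : (Fin mt → Ω) → Finset P) (𝒜 : (Fin mt → Ω) → P → H)
    (ε δ γ : ℝ) (hδ1 : δ < 1)
    (hγ : ∀ x, ((Y x).card : ℝ) ≤ γ)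
    (m : ℕ) (F : Fin (m + 1) → H)
    (hsep : ∀ i j, i ≠ j → ε < L (F i) (F j))
    (lab : Fin (m + 1) → (Fin mt → Ω) → P)
    (hlab : ∀ i x, lab i x ∈ Y x)
    (hPAC : ∀ i, ENNReal.ofReal (1 - δ) ≤
      (Measure.pi fun _ : Fin mt => μ) {x | L (𝒜 x (lab i x)) (F i) ≤ ε / 2})
    (hCmeas : ∀ i : Fin (m + 1),
      MeasurableSet {x : Fin mt → Ω | ∀ y ∈ Y x, ε / 2 < L (𝒜 x y) (F i)}) :
    (∀ x : Fin mt → Ω,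
        (m : ℝ) + 1 - (Y x).card ≤
          ((Finset.univ.filter
              (fun i : Fin (m + 1) => ∀ y ∈ Y x, ε / 2 < L (𝒜 x y) (F i))).card : ℝ)) ∧
    (∫ x, ((Finset.univ.filter
          (fun i : Fin (m + 1) => ∀ y ∈ Y x, ε / 2 < L (𝒜 x y) (F i))).card : ℝ)
        ∂(Measure.pi fun _ : Fin mt => μ) ≤ (m + 1) * δ) ∧
    ((m : ℝ) ≤ γ / (1 - δ) - 1) := by
  have hcount : ∀ x, (m : ℝ) + 1 - (Y x).card ≤
      (#{i | ∀ y ∈ Y x, ε / 2 < L (𝒜 x y) (F i)} : ℝ) := fun x => by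
    have := card_le_card_filter_forall_lt_add_card hsym htri hsep (𝒜 x) (Y x)
    rw [Fintype.card_fin] at this
    rw [sub_le_iff_le_add]
    exact_mod_cast this
  have hint : ∫ x, (#{i | ∀ y ∈ Y x, ε / 2 < L (𝒜 x y) (F i)} : ℝ)
      ∂(Measure.pi fun _ : Fin mt => μ) ≤ (m + 1) * δ := by
    rw [integral_card_filter hCmeas]
    calc _ ≤ ∑ _i : Fin (m + 1), δ := sum_le_sum fun i _ =>
          measureReal_le_of_ofReal_one_sub_le (hCmeas i)
            (fun x hx hfar => (hfar _ (hlab i x)).not_ge hx) (hPAC i)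
      _ = (m + 1) * δ := by simp
  have hlower : (m : ℝ) + 1 - γ ≤ ∫ x, (#{i | ∀ y ∈ Y x, ε / 2 < L (𝒜 x y) (F i)} : ℝ)
      ∂(Measure.pi fun _ : Fin mt => μ) := by
    simpa using integral_mono (integrable_const _)
      (integrable_card_filter (ν := Measure.pi fun _ => μ) hCmeas)
      fun x => (sub_le_sub_left (hγ x) ((m : ℝ) + 1)).trans (hcount x)
  refine ⟨hcount, hint, ?_⟩
  rw [le_sub_iff_add_le, le_div_iff₀ (sub_pos.mpr hδ1)]
  linarith

theorem stmt13 {Ω H P : Type*} [MeasurableSpace Ω] [Fintype P]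
    (μ : Measure Ω) [IsProbabilityMeasure μ] (mt : ℕ)
    (L : H → H → ℝ) (hnn : ∀ a b, 0 ≤ L a b) (hsym : ∀ a b, L a b = L b a)
    (htri : ∀ a b c, L a c ≤ L a b + L b c)
    (Y : (Fin mt → Ω) → Finset P) (𝒜 : (Fin mt → Ω) → P → H)
    (ε δ γ : ℝ) (hδ0 : 0 < δ) (hδ1 : δ < 1)
    (hγ : ∀ x, ((Y x).card : ℝ) ≤ γ)
    (m : ℕ) (F : Fin (m + 1) → H)
    (hsep : ∀ i j, i ≠ j → ε < L (F i) (F j))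
    (lab : Fin (m + 1) → (Fin mt → Ω) → P)
    (hlab : ∀ i x, lab i x ∈ Y x)
    (hPAC : ∀ i, ENNReal.ofReal (1 - δ) ≤
      (Measure.pi fun _ : Fin mt => μ) {x | L (𝒜 x (lab i x)) (F i) ≤ ε / 2})
    (hCmeas : ∀ i : Fin (m + 1),
      MeasurableSet {x : Fin mt → Ω | ∀ y ∈ Y x, ε / 2 < L (𝒜 x y) (F i)}) :
    (∀ x : Fin mt → Ω,
        (m : ℝ) + 1 - (Y x).card ≤
          ((Finset.univ.filter
              (fun i : Fin (m + 1) => ∀ y ∈ Y x, ε / 2 < L (𝒜 x y) (F i))).card : ℝ)) ∧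
    (∫ x, ((Finset.univ.filter
          (fun i : Fin (m + 1) => ∀ y ∈ Y x, ε / 2 < L (𝒜 x y) (F i))).card : ℝ)
        ∂(Measure.pi fun _ : Fin mt => μ) ≤ (m + 1) * δ) ∧
    ((m : ℝ) ≤ γ / (1 - δ) - 1) :=
  stmt13_general μ mt L hsym htri Y 𝒜 ε δ γ hδ1 hγ m F hsep lab hlab hPAC hCmeas
end

section
/- Let k ∈ ℕ₊, Y a finite set with |Y| ≥ 2, X a set, and let ℋ be a family of functions X^k → Y of the form H(x₁,...,x_k) = h(x_k) for h ranging over all functions X → Y (i.e., hypotheses depending only on the last coordinate, rank ≤ 1). If X is infinite, then VCN_k(ℋ) = ∞ and ℋ does not have the k-ary Haussler packing property with respect to the 0/1-loss ℓ_{0/1}(x, y, y') = 1[y ≠ y']. -/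
/-!
Both parts reduce to the one-variable class of all maps `X → Y`, read off the last coordinate.

Dimension: freeze the other `k - 1` coordinates at a point `x₀` outside a finite set `V`.
Then `H_x(t)_σ` is `h(t)` when `σ` fixes the last slot and `h(x₀)` otherwise, so every
labelling of `V` by two values `y₀ ≠ y₁` is realised.

Packing: index `2^m` points of `X` by `𝔽₂^m` and take the Hadamard code `v ↦ c(v ⬝ᵥ w)`
with `c : 𝔽₂ ↪ Y`. Under the uniform measure two distinct codewords disagree with
probability exactly `1/2`, and the `k`-ary loss dominates the disagreement in the last
coordinate. By the triangle inequality, a `1/5`-cover therefore needs `2^m` members, for every `m`.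
-/

open MeasureTheory

/-- `ℱ` Natarajan-shatters the finite set `A`. -/
def NatShatters {X Y : Type*} [DecidableEq X] (ℱ : Set (X → Y)) (A : Finset X) : Prop :=
  ∃ f₀ f₁ : X → Y, (∀ a ∈ A, f₀ a ≠ f₁ a) ∧
    ∀ U ⊆ A, ∃ g ∈ ℱ, ∀ a ∈ A, g a = if a ∈ U then f₁ a else f₀ a

open Finset ProbabilityTheory

section Definitions

variable {X Y : Type*} {k : ℕ}

def coordClass (j : Fin k) : Set ((Fin k → X) → Y) :=
  Set.range fun h : X → Y => fun z => h (z j)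

/-- The class `{H_x : H ∈ ℋ}` whose Natarajan dimension, maximised over `x`, is `VCN_k(ℋ)`. -/
def vcnClass (ℋ : Set ((Fin k → X) → Y)) (x : Fin (k - 1) → X) :
    Set (X → Equiv.Perm (Fin k) → Y) :=
  {g | ∃ H ∈ ℋ, g = fun t σ => H (fun i => if h : (σ i : ℕ) < k - 1 then x ⟨σ i, h⟩ else t)}

noncomputable def permLoss [MeasurableSpace X] (μ : Measure X) (F H : (Fin k → X) → Y) : ℝ :=
  (Measure.pi fun _ : Fin k => μ).real
    {z | (fun σ : Equiv.Perm (Fin k) => F (fun i => z (σ i))) ≠ fun σ => H (fun i => z (σ i))}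

def HasHausslerPacking [MeasurableSpace X] (ℋ : Set ((Fin k → X) → Y)) : Prop :=
  ∃ M : ℝ → ℝ, ∀ ε : ℝ, 0 < ε → ε < 1 → ∀ μ : Measure X, IsProbabilityMeasure μ →
    ∃ ℋ' : Finset ((Fin k → X) → Y), ↑ℋ' ⊆ ℋ ∧ (#ℋ' : ℝ) ≤ M ε ∧
      ∀ F ∈ ℋ, ∃ H ∈ ℋ', permLoss μ F H ≤ ε

end Definitions

section Natarajan

variable {X Y : Type*} [DecidableEq X] [Nontrivial Y] {k : ℕ}

theorem natShatters_vcnClass_coordClass_last (hk : 0 < k) {x₀ : X} {V : Finset X}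
    (hx₀ : x₀ ∉ V) :
    NatShatters (vcnClass (coordClass (Y := Y) ⟨k - 1, Nat.sub_lt hk Nat.one_pos⟩)
      fun _ => x₀) V := by
  obtain ⟨y₀, y₁, hy⟩ := exists_pair_ne Y
  refine ⟨fun _ _ => y₀, fun _ σ => if (σ ⟨k - 1, Nat.sub_lt hk Nat.one_pos⟩ : ℕ) < k - 1
    then y₀ else y₁, fun a _ h => hy (by simpa using congrFun h 1), fun U hU => ?_⟩
  refine ⟨_, ⟨_, ⟨fun t => if t ∈ U then y₁ else y₀, rfl⟩, rfl⟩, fun a _ => ?_⟩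
  have hx₀U : x₀ ∉ U := fun h => hx₀ (hU h)
  funext σ
  by_cases hσ : (σ ⟨k - 1, Nat.sub_lt hk Nat.one_pos⟩ : ℕ) < k - 1 <;>
    by_cases ha : a ∈ U <;> simp [hσ, ha, hx₀U]

theorem exists_natShatters_vcnClass_coordClass_last [Infinite X] (hk : 0 < k) (n : ℕ) :
    ∃ x : Fin (k - 1) → X, ∃ V : Finset X, #V = n ∧
      NatShatters (vcnClass (coordClass (Y := Y) ⟨k - 1, Nat.sub_lt hk Nat.one_pos⟩) x) V := by
  obtain ⟨V, hV⟩ := Infinite.exists_subset_card_eq X (n + 1)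
  obtain ⟨x₀, hx₀⟩ : V.Nonempty := card_pos.mp (by omega)
  exact ⟨fun _ => x₀, V.erase x₀, by simp [card_erase_of_mem hx₀, hV],
    natShatters_vcnClass_coordClass_last hk (notMem_erase x₀ V)⟩

end Natarajan

section HadamardCode

variable {m : ℕ}

theorem two_mul_card_dotProduct_eq_one {u : Fin m → ZMod 2} (hu : u ≠ 0) :
    2 * #{v : Fin m → ZMod 2 | v ⬝ᵥ u = 1} = 2 ^ m := by
  let φ : (Fin m → ZMod 2) →+ ZMod 2 := AddMonoidHom.mk' (· ⬝ᵥ u) fun v w => add_dotProduct v w u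
  obtain ⟨i, hi⟩ : ∃ i, u i ≠ 0 := Function.ne_iff.mp hu
  have h1 : (1 : ZMod 2) ∈ Set.range φ := ⟨Pi.single i 1, by
    simp only [AddMonoidHom.mk'_apply, single_dotProduct, one_mul, φ]
    generalize u i = a at hi
    revert a
    decide⟩
  have hfiber := AddMonoidHom.card_fiber_eq_of_mem_range φ ⟨0, map_zero φ⟩ h1
  have hsplit := card_filter_add_card_filter_not (s := univ) fun v => φ v = 1
  have hne : ∀ a : ZMod 2, ¬a = 1 ↔ a = 0 := by decide
  simp only [hne, card_univ, Fintype.card_fun, ZMod.card, Fintype.card_fin] at hsplit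
  simp only [φ, AddMonoidHom.mk'_apply] at hfiber hsplit
  omega

theorem uniformOn_univ_setOf_dotProduct_ne {w w' : Fin m → ZMod 2} (h : w ≠ w') :
    uniformOn Set.univ {v : Fin m → ZMod 2 | v ⬝ᵥ w ≠ v ⬝ᵥ w'} = 2⁻¹ := by
  have hne : ∀ a b : ZMod 2, a ≠ b ↔ a - b = 1 := by decide
  have hset : {v : Fin m → ZMod 2 | v ⬝ᵥ w ≠ v ⬝ᵥ w'} =
      ↑({v | v ⬝ᵥ (w - w') = 1} : Finset _) := by
    ext v
    simp [dotProduct_sub, hne]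
  have hcard := two_mul_card_dotProduct_eq_one (sub_ne_zero.mpr h)
  have hpos : #{v : Fin m → ZMod 2 | v ⬝ᵥ (w - w') = 1} ≠ 0 := by
    have := Nat.two_pow_pos m
    omega
  rw [uniformOn_univ, hset, Measure.count_apply_finset, Fintype.card_fun, ZMod.card,
    Fintype.card_fin, ← hcard, Nat.cast_mul, ENNReal.div_eq_inv_mul,
    ENNReal.mul_inv (by simp) (by simp), mul_assoc,
    ENNReal.inv_mul_cancel (by simpa using hpos) (by simp), mul_one, Nat.cast_ofNat]

end HadamardCode

section Packing

variable {X Y : Type*} [MeasurableSpace X]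

theorem measureReal_setOf_ne_le_add (μ : Measure X) [IsFiniteMeasure μ] (f g h : X → Y) :
    μ.real {x | f x ≠ g x} ≤ μ.real {x | f x ≠ h x} + μ.real {x | g x ≠ h x} := by
  refine (measureReal_mono fun x hx => ?_).trans (measureReal_union_le _ _)
  by_contra hc
  rw [Set.mem_union, not_or] at hc
  exact hx ((of_not_not hc.1).trans (of_not_not hc.2).symm)

theorem card_le_card_of_separated_of_cover {ι : Type*} [Fintype ι] {μ : Measure X}
    [IsFiniteMeasure μ] {ε : ℝ} {f : ι → X → Y}
    (hsep : Pairwise fun i j => 2 * ε < μ.real {x | f i x ≠ f j x}) {C : Finset (X → Y)}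
    (hC : ∀ i, ∃ h ∈ C, μ.real {x | f i x ≠ h x} ≤ ε) : Fintype.card ι ≤ #C := by
  choose h hmem hclose using hC
  refine card_univ (α := ι) ▸ card_le_card_of_injOn h (fun i _ => hmem i) fun i _ j _ hij => ?_
  by_contra hne
  linarith [hsep hne, measureReal_setOf_ne_le_add μ (f i) (f j) (h j), hij ▸ hclose i, hclose j]

variable [DiscreteMeasurableSpace X]

theorem exists_pairwise_measureReal_setOf_ne_eq_half [Infinite X] [Nontrivial Y] (m : ℕ) :
    ∃ μ : Measure X, IsProbabilityMeasure μ ∧ ∃ f : (Fin m → ZMod 2) → X → Y,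
      Pairwise fun w w' => μ.real {x | f w x ≠ f w' x} = 2⁻¹ := by
  obtain ⟨y₀, y₁, hy⟩ := exists_pair_ne Y
  let c : ZMod 2 → Y := fun a => if a = 0 then y₀ else y₁
  have hc : Function.Injective c := by
    have hone : ∀ a : ZMod 2, a ≠ 0 → a = 1 := by decide
    intro a b hab
    simp only [c] at hab
    split_ifs at hab with ha hb hb
    exacts [ha.trans hb.symm, absurd hab hy, absurd hab hy.symm,
      (hone a ha).trans (hone b hb).symm]
  let e : (Fin m → ZMod 2) ↪ X :=
    (Fintype.equivFin _).toEmbedding.trans (Fin.valEmbedding.trans (Infinite.natEmbedding X))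
  refine ⟨(uniformOn Set.univ).map e,
    Measure.isProbabilityMeasure_map Measurable.of_discrete.aemeasurable,
    fun w => Function.extend e (fun v => c (v ⬝ᵥ w)) fun _ => y₀, fun w w' hne => ?_⟩
  dsimp only
  have hpre : e ⁻¹' {x | Function.extend e (fun v => c (v ⬝ᵥ w)) (fun _ => y₀) x ≠
      Function.extend e (fun v => c (v ⬝ᵥ w')) (fun _ => y₀) x} = {v | v ⬝ᵥ w ≠ v ⬝ᵥ w'} := by
    ext v
    simp [e.injective.extend_apply, hc.ne_iff]
  rw [measureReal_def, Measure.map_apply Measurable.of_discrete .of_discrete, hpre,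
    uniformOn_univ_setOf_dotProduct_ne hne]
  simp

theorem measureReal_setOf_ne_le_permLoss {k : ℕ} (μ : Measure X) [IsProbabilityMeasure μ]
    (j : Fin k) (f h : X → Y) :
    μ.real {x | f x ≠ h x} ≤ permLoss μ (fun z => f (z j)) (fun z => h (z j)) := by
  rw [← (measurePreserving_eval (fun _ => μ) j).measureReal_preimage
    MeasurableSet.of_discrete.nullMeasurableSet]
  exact measureReal_mono fun z hz heq => hz (by simpa using congrFun heq 1)

theorem not_hasHausslerPacking_coordClass [Infinite X] [Nontrivial Y] {k : ℕ} (j : Fin k) :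
    ¬HasHausslerPacking (coordClass (X := X) (Y := Y) j) := by
  classical
  rintro ⟨M, hM⟩
  obtain ⟨m, hm⟩ := pow_unbounded_of_one_lt (M (1 / 5)) one_lt_two
  obtain ⟨μ, hμ, f, hf⟩ := exists_pairwise_measureReal_setOf_ne_eq_half (X := X) (Y := Y) m
  obtain ⟨ℋ', hℋ', hcard, hcover⟩ := hM (1 / 5) (by norm_num) (by norm_num) μ hμ
  -- `h ∘ eval j` is recovered from its values on the diagonal
  have hC : ∀ w, ∃ h ∈ ℋ'.image (fun H x => H fun _ => x), μ.real {x | f w x ≠ h x} ≤ 1 / 5 := by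
    intro w
    obtain ⟨H, hH, hle⟩ := hcover _ ⟨f w, rfl⟩
    obtain ⟨h, rfl⟩ := hℋ' hH
    exact ⟨h, mem_image_of_mem _ hH, (measureReal_setOf_ne_le_permLoss μ j (f w) h).trans hle⟩
  have hsep := card_le_card_of_separated_of_cover
    (fun w w' hne => by dsimp only; rw [hf hne]; norm_num) hC
  simp only [Fintype.card_fun, ZMod.card, Fintype.card_fin] at hsep
  have : ((2 ^ m : ℕ) : ℝ) ≤ #ℋ' := by exact_mod_cast hsep.trans card_image_le
  push_cast at this
  linarith

end Packing

/-- For the class of all hypotheses depending only on the last coordinate over an infinite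
domain, the `VCN_k`-dimension is infinite and the `k`-ary Haussler packing property fails
for the 0/1-loss. -/
theorem stmt19 {X : Type*} [DecidableEq X] {mX : MeasurableSpace X} (hmX : mX = ⊤)
    (hXinf : Infinite X) {Y : Type*} [Fintype Y] (hY : 2 ≤ Fintype.card Y)
    (k : ℕ) (hk : 0 < k)
    (ℋ : Set ((Fin k → X) → Y))
    (hℋ : ℋ = Set.range (fun h : X → Y =>
      fun z : Fin k → X => h (z ⟨k - 1, Nat.sub_lt hk Nat.one_pos⟩))) :
    -- (1) the `VCN_k`-dimension of `ℋ` is infinite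
    (∀ n : ℕ, ∃ x : Fin (k - 1) → X, ∃ V : Finset X, V.card = n ∧
      NatShatters
        {g : X → (Equiv.Perm (Fin k) → Y) | ∃ H ∈ ℋ, g = fun t σ =>
          H (fun i => if h : ((σ i : ℕ)) < k - 1 then x ⟨(σ i : ℕ), h⟩ else t)} V) ∧
    -- (2) `ℋ` fails the `k`-ary Haussler packing property w.r.t. the 0/1-loss
    ¬ ∃ M : ℝ → ℝ, ∀ ε : ℝ, 0 < ε → ε < 1 →
        ∀ μ : Measure X, IsProbabilityMeasure μ →
          ∃ ℋ' : Finset ((Fin k → X) → Y), ↑ℋ' ⊆ ℋ ∧ (ℋ'.card : ℝ) ≤ M ε ∧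
            ∀ F ∈ ℋ, ∃ H ∈ ℋ',
              ((Measure.pi fun _ : Fin k => μ)
                {z : Fin k → X |
                  (fun σ : Equiv.Perm (Fin k) => F (fun i => z (σ i))) ≠
                  (fun σ : Equiv.Perm (Fin k) => H (fun i => z (σ i)))}).toReal ≤ ε := by
  subst hℋ
  have : DiscreteMeasurableSpace X := hmX ▸ inferInstance
  have : Nontrivial Y := Fintype.one_lt_card_iff_nontrivial.mp hY
  exact ⟨exists_natShatters_vcnClass_coordClass_last hk, not_hasHausslerPacking_coordClass _⟩
end
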